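/- In the semigroup H, for any i, j, k ∈ {1,2,3} with i ≠ j: P·g·a_i·a_j·a_k = a_i·P·g·a_j·a_k. -/
import Mathlib


inductive Phi
  | L | M | P | Q | R | g | s1 | s2 | t1 | t2 | t3 | a1 | a2 | a3
deriving DecidableEq

open Phi

abbrev W0 := WithZero (FreeMonoid Phi)

def w (l : List Phi) : W0 := ((FreeMonoid.ofList l : FreeMonoid Phi) : W0)

def ai : Fin 3 → Phi
  | 0 => a1 | 1 => a2 | 2 => a3

def ti : Fin 3 → Phi
  | 0 => t1 | 1 => t2 | 2 => t3

def si : Fin 2 → Phi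
  | 0 => s1 | 1 => s2

/-- `x` is one of the letters `a1, a2, a3`. -/
def isA (x : Phi) : Prop := x = a1 ∨ x = a2 ∨ x = a3

/-- The defining relations (1)–(14) of the semigroup `H`. -/
inductive rel : W0 → W0 → Prop
  | r1L (x : Phi) : rel (w [x, L]) 0
  | r1M (x : Phi) : rel (w [x, M]) 0
  | r2 : rel (w [L]) (w [M, P, g])
  | r3 (i : Fin 3) : rel (w [g, ai i]) (w [ai i, g])
  | r4 (x : Phi) (h : ¬ isA x) : rel (w [g, x]) 0
  | r5 (i j : Fin 3) : rel (w [ai i, g, ai j]) (w [ai i, R, s1, Q, ai j])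
  | r6 (i : Fin 3) (x : Phi) (h : x = R ∨ isA x) : rel (w [ti i, x]) (w [x, ti i])
  | r7 (i : Fin 3) : rel (w [P, ai i, ti i]) (w [ai i, P, s1])
  | r8 (i j : Fin 3) (h : i ≠ j) : rel (w [P, ai j, ti i]) (w [ai j, P, s2])
  | r9 (i : Fin 3) (j : Fin 2) : rel (w [si j, ai i]) (w [ai i, si j])
  | r10 : rel (w [s1, R]) (w [R, s1])
  | r11 (i : Fin 3) : rel (w [s1, Q, ai i]) (w [ti i, ai i, Q])
  | r12 : rel (w [P, R, s1]) 0
  | r13 (i : Fin 3) : rel (w [s2, R, ai i]) (w [ai i, s2, R])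
  | r14 (i : Fin 3) : rel (w [s2, R, Q, ai i]) (w [R, ti i, ai i, Q])

/-- The congruence on the free monoid with zero generated by the relations. -/
def hCon : Con W0 := conGen rel

/-- The semigroup (with zero) `H` of the paper. -/
abbrev H := hCon.Quotient

/-- The quotient map. -/
def q : W0 →* H := hCon.mk'

/-- `l` is a word in the letters `a1, a2, a3`. -/
def Aword (l : List Phi) : Prop := ∀ x ∈ l, isA x

/-- `l` is square-free: it contains no factor `Y ++ Y` with `Y` nonempty. -/
def SqFree (l : List Phi) : Prop := ∀ Y : List Phi, Y ≠ [] → ¬ (Y ++ Y) <:+: l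


lemma ww (l1 l2 : List Phi) : w (l1 ++ l2) = w l1 * w l2 := by
  simp [w, ← WithZero.coe_mul]

lemma st (a b : List Phi) {u v : List Phi} (h : rel (w u) (w v)) :
    q (w (a ++ u ++ b)) = q (w (a ++ v ++ b)) := by
  have huv : q (w u) = q (w v) := hCon.eq.2 (ConGen.Rel.of _ _ h)
  simp only [ww, map_mul, huv]

/-- for `i ≠ j`: `P·g·aᵢ·aⱼ·aₖ = aᵢ·P·g·aⱼ·aₖ`. -/
theorem stmt7 (i j k : Fin 3) (hij : i ≠ j) :
    q (w [P, g, ai i, ai j, ai k]) = q (w [ai i, P, g, ai j, ai k]) := by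
  have h1 := st [P] [ai j, ai k] (rel.r3 i)
  have h2 := st [P] [ai k] (rel.r5 i j)
  have h3 := st [P, ai i, R] [ai k] (rel.r11 j)
  have h4 := (st [P, ai i] [ai j, Q, ai k] (rel.r6 j R (Or.inl rfl))).symm
  have h5 := st [] [R, ai j, Q, ai k] (rel.r8 j i hij.symm)
  have h6 := st [ai i, P] [Q, ai k] (rel.r13 j)
  have h7 := st [ai i, P, ai j] [] (rel.r14 k)
  have h8 := st [ai i, P] [ai k] (rel.r3 j)
  have h9 := st [ai i, P] [] (rel.r5 j k)
  have h10 := st [ai i, P, ai j, R] [] (rel.r11 k)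
  simp only [List.cons_append, List.nil_append, List.append_nil] at *
  rw [h1, h2, h3, h4, h5, h6, h7, h8, h9, h10]
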